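/- (Necessity for finite second moments) Let $(A_t)$, $(B_t)$ be as in the generalized autoregression with nonnegative entries, and suppose $\rho\big(E[A_0^{\otimes 2}]\big) \geq 1$ and $E[B_0^{\otimes 2}]$ has all coordinates strictly positive. Then the series $\sum_{k=0}^{\infty}\big(E[A_0^{\otimes 2}]\big)^k E[B_0^{\otimes 2}]$ diverges (in at least one coordinate), and hence no strictly stationary solution $Y_t$ of $Y_t = A_t Y_{t-1} + B_t$ can satisfy $E[\|Y_t\|^2]<\infty$. -/

import Mathlib

/-!
Write `M = E[A₀^{⊗2}]` and `v = E[B₀^{⊗2}]`. If `∑ₖ Mᵏ v` converged in every coordinate, then,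
as `v > 0`, every nonnegative vector `y` satisfies `y ≤ C v`, hence `Mᵏ y ≤ C Mᵏ v → 0`. For an
eigenvector `x` of `M` with eigenvalue `z`, `|z| ≥ 1`, the triangle inequality gives
`|x| ≤ |z|ᵏ |x| ≤ Mᵏ |x|` (with `|x|` taken coordinatewise), a contradiction.

For a nonnegative solution, unrolling the recursion `m` times gives
`Y₀ ≥ ∑_{k<m} A₀ A₋₁ ⋯ A₁₋ₖ B₋ₖ`. The tensor square is monotone and superadditive on nonnegative
vectors, and `(P u)^{⊗2} = P^{⊗2} u^{⊗2}`; since `A₀ ⋯ A₁₋ₖ` is independent of `(A₋ₖ, B₋ₖ)`, taking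
expectations factorizes each term as `Mᵏ v`. So the partial sums of `∑ₖ Mᵏ v` are bounded by
`E[Y₀^{⊗2}]`, which is finite when `E‖Y₀‖² < ∞`.
-/

open MeasureTheory ProbabilityTheory Matrix Filter Topology

/-- Matrices carry the product (Borel) measurable structure. -/
instance matrixMeasurableSpace {m n : Type*} {α : Type*} [MeasurableSpace α] :
    MeasurableSpace (Matrix m n α) :=
  (inferInstance : MeasurableSpace (m → n → α))

/-- The `r`-fold Kronecker power `M^{⊗r}` of a square matrix. -/
noncomputable def kronPow {n : ℕ} (M : Matrix (Fin n) (Fin n) ℝ) :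
    (r : ℕ) → Matrix (Fin (n ^ r)) (Fin (n ^ r)) ℝ
  | 0 => 1
  | r + 1 =>
    Matrix.reindex (finProdFinEquiv.trans (finCongr (pow_succ n r).symm))
      (finProdFinEquiv.trans (finCongr (pow_succ n r).symm))
      (Matrix.kroneckerMap (· * ·) (kronPow M r) M)

/-- The `r`-fold Kronecker power `v^{⊗r}` of a vector. -/
noncomputable def kronPowVec {n : ℕ} (v : Fin n → ℝ) :
    (r : ℕ) → Fin (n ^ r) → ℝ
  | 0 => fun _ => 1
  | r + 1 => fun i =>
    kronPowVec v r ((finProdFinEquiv.trans (finCongr (pow_succ n r).symm)).symm i).1 *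
      v ((finProdFinEquiv.trans (finCongr (pow_succ n r).symm)).symm i).2

/-- `prodA A t ω k = A_t(ω) A_{t-1}(ω) ⋯ A_{t-k+1}(ω)` (`k` factors); the empty product is
the identity. -/
noncomputable def prodA {n : ℕ} {Ω : Type*} (A : ℤ → Ω → Matrix (Fin n) (Fin n) ℝ)
    (t : ℤ) (ω : Ω) : ℕ → Matrix (Fin n) (Fin n) ℝ
  | 0 => 1
  | k + 1 => prodA A t ω k * A (t - k) ω

namespace Matrix

variable {l m p : Type*} [Fintype m]

lemma mulVec_mono_of_nonneg {M : Matrix l m ℝ} (hM : ∀ i j, 0 ≤ M i j) {u w : m → ℝ}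
    (huw : u ≤ w) : M *ᵥ u ≤ M *ᵥ w :=
  fun i => dotProduct_le_dotProduct_of_nonneg_left huw (hM i)

lemma mulVec_nonneg_of_nonneg {M : Matrix l m ℝ} (hM : ∀ i j, 0 ≤ M i j) {u : m → ℝ}
    (hu : 0 ≤ u) : 0 ≤ M *ᵥ u := by
  simpa using mulVec_mono_of_nonneg hM hu

lemma mul_apply_nonneg {M : Matrix l m ℝ} {N : Matrix m p ℝ} (hM : ∀ i j, 0 ≤ M i j)
    (hN : ∀ i j, 0 ≤ N i j) (i : l) (k : p) : 0 ≤ (M * N) i k :=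
  Finset.sum_nonneg fun j _ => mul_nonneg (hM i j) (hN j k)

lemma norm_map_mulVec_le {M : Matrix l m ℝ} (hM : ∀ i j, 0 ≤ M i j) (x : m → ℂ) (i : l) :
    ‖(M.map (algebraMap ℝ ℂ) *ᵥ x) i‖ ≤ (M *ᵥ fun j => ‖x j‖) i :=
  (norm_sum_le _ _).trans_eq <| Finset.sum_congr rfl fun j _ => by
    simp [abs_of_nonneg (hM i j)]

lemma kronecker_mulVec_mul {l' m' α : Type*} [Fintype m'] [CommSemiring α]
    (A : Matrix l m α) (B : Matrix l' m' α) (u : m → α) (w : m' → α) :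
    kroneckerMap (· * ·) A B *ᵥ (fun p => u p.1 * w p.2) =
      fun p => (A *ᵥ u) p.1 * (B *ᵥ w) p.2 := by
  ext ⟨i, j⟩
  simp only [mulVec, dotProduct, kroneckerMap_apply, Fintype.sum_prod_type, Finset.sum_mul_sum]
  exact Finset.sum_congr rfl fun a _ => Finset.sum_congr rfl fun b _ => by ring

variable [DecidableEq m]

lemma pow_apply_nonneg_of_nonneg {M : Matrix m m ℝ} (hM : ∀ i j, 0 ≤ M i j) (k : ℕ) (i j : m) :
    0 ≤ (M ^ k) i j := by
  induction k generalizing i j with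
  | zero => by_cases h : i = j <;> simp [h]
  | succ k ih => rw [pow_succ]; exact mul_apply_nonneg ih hM i j

theorem exists_not_summable_pow_mulVec {M : Matrix m m ℝ} (hM : ∀ i j, 0 ≤ M i j)
    {v : m → ℝ} (hv : ∀ i, 0 < v i) {z : ℂ} (hz : z ∈ spectrum ℂ (M.map (algebraMap ℝ ℂ)))
    (hz1 : 1 ≤ ‖z‖) : ∃ i, ¬ Summable fun k => ((M ^ k) *ᵥ v) i := by
  by_contra! hsum
  rw [← spectrum_toLin', ← Module.End.hasEigenvalue_iff_mem_spectrum] at hz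
  obtain ⟨x, hx⟩ := hz.exists_hasEigenvector
  obtain ⟨i, hxi⟩ := Function.ne_iff.1 hx.2
  set C := ∑ j, ‖x j‖ / v j
  have hxC : (fun j => ‖x j‖) ≤ C • v := fun j => by
    have : ‖x j‖ / v j ≤ C :=
      Finset.single_le_sum (fun l _ => div_nonneg (norm_nonneg (x l)) (hv l).le)
        (Finset.mem_univ j)
    simpa [div_le_iff₀ (hv j)] using this
  have hbound (k : ℕ) : ‖x i‖ ≤ C * ((M ^ k) *ᵥ v) i :=
    calc ‖x i‖ ≤ ‖z ^ k • x i‖ := by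
          rw [norm_smul, norm_pow]
          exact le_mul_of_one_le_left (norm_nonneg _) (one_le_pow₀ hz1)
      _ = ‖((M ^ k).map (algebraMap ℝ ℂ) *ᵥ x) i‖ := by
          rw [Matrix.map_pow, ← toLin'_apply, toLin'_pow, hx.pow_apply]; rfl
      _ ≤ ((M ^ k) *ᵥ fun j => ‖x j‖) i := norm_map_mulVec_le (pow_apply_nonneg_of_nonneg hM k) x i
      _ ≤ ((M ^ k) *ᵥ (C • v)) i := mulVec_mono_of_nonneg (pow_apply_nonneg_of_nonneg hM k) hxC i
      _ = C * ((M ^ k) *ᵥ v) i := by rw [mulVec_smul, Pi.smul_apply, smul_eq_mul]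
  have hlim : Tendsto (fun k => C * ((M ^ k) *ᵥ v) i) atTop (𝓝 0) := by
    simpa using ((hsum i).tendsto_atTop_zero).const_mul C
  exact hxi (norm_le_zero_iff.1 (ge_of_tendsto' hlim hbound))

end Matrix

section KroneckerSquare

variable {n : ℕ}

/-- `i ↦ (i / n, i % n)`: the row-major layout in which `kronPow` and `kronPowVec` place the two
factors of a Kronecker square. -/
def kronTwoEquiv (n : ℕ) : Fin (n ^ 2) ≃ Fin n × Fin n :=
  (finCongr (sq n)).trans finProdFinEquiv.symm

lemma finProdFinEquiv_trans_finCongr_symm_apply {r : ℕ} (x : Fin (n ^ (r + 1))) :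
    (finProdFinEquiv.trans (finCongr (pow_succ n r).symm)).symm x =
      (⟨x / n, Nat.div_lt_of_lt_mul (by simpa [pow_succ'] using x.isLt)⟩,
        ⟨x % n, Nat.mod_lt _ (Nat.pos_of_ne_zero fun h => by simp [h] at x; exact x.elim0)⟩) := by
  ext <;> simp

lemma Nat.div_lt_of_lt_sq {x : ℕ} (hx : x < n ^ 2) : x / n < n :=
  Nat.div_lt_of_lt_mul (by rwa [← sq])

lemma kronPowVec_two_apply (v : Fin n → ℝ) (i : Fin (n ^ 2)) :
    kronPowVec v 2 i = v (kronTwoEquiv n i).1 * v (kronTwoEquiv n i).2 := by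
  simp only [kronPowVec, one_mul, finProdFinEquiv_trans_finCongr_symm_apply]
  congr 2
  ext
  simp [kronTwoEquiv, Nat.mod_eq_of_lt (Nat.div_lt_of_lt_sq i.isLt)]

lemma kronPow_two_apply (M : Matrix (Fin n) (Fin n) ℝ) (i j : Fin (n ^ 2)) :
    kronPow M 2 i j =
      M (kronTwoEquiv n i).1 (kronTwoEquiv n j).1 *
        M (kronTwoEquiv n i).2 (kronTwoEquiv n j).2 := by
  simp only [kronPow, reindex_apply, submatrix_apply, kroneckerMap_apply, one_apply,
    finProdFinEquiv_trans_finCongr_symm_apply, Nat.div_div_eq_div_mul, ← sq,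
    Nat.div_eq_of_lt i.isLt, Nat.div_eq_of_lt j.isLt, if_true, one_mul,
    Nat.mod_eq_of_lt (Nat.div_lt_of_lt_sq i.isLt), Nat.mod_eq_of_lt (Nat.div_lt_of_lt_sq j.isLt)]
  rfl

lemma kronPow_two (M : Matrix (Fin n) (Fin n) ℝ) :
    kronPow M 2 = (kroneckerMap (· * ·) M M).submatrix (kronTwoEquiv n) (kronTwoEquiv n) := by
  ext i j
  exact kronPow_two_apply M i j

lemma kronPowVec_two (v : Fin n → ℝ) :
    kronPowVec v 2 = (fun p => v p.1 * v p.2) ∘ kronTwoEquiv n := by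
  ext i
  exact kronPowVec_two_apply v i

lemma kronPow_two_one : kronPow (1 : Matrix (Fin n) (Fin n) ℝ) 2 = 1 := by
  rw [kronPow_two, one_kronecker_one, submatrix_one_equiv]

lemma kronPow_two_mul (M N : Matrix (Fin n) (Fin n) ℝ) :
    kronPow (M * N) 2 = kronPow M 2 * kronPow N 2 := by
  rw [kronPow_two, kronPow_two, kronPow_two, submatrix_mul_equiv, mul_kronecker_mul]

lemma kronPowVec_two_mulVec (M : Matrix (Fin n) (Fin n) ℝ) (v : Fin n → ℝ) :
    kronPowVec (M *ᵥ v) 2 = kronPow M 2 *ᵥ kronPowVec v 2 := by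
  rw [kronPow_two, kronPowVec_two, kronPowVec_two, submatrix_mulVec_equiv, Function.comp_assoc,
    Equiv.self_comp_symm, Function.comp_id, kronecker_mulVec_mul]

lemma kronPowVec_two_mono {u w : Fin n → ℝ} (hu : 0 ≤ u) (huw : u ≤ w) :
    kronPowVec u 2 ≤ kronPowVec w 2 := fun i => by
  simp only [kronPowVec_two_apply]
  exact mul_le_mul (huw _) (huw _) (hu _) ((hu _).trans (huw _))

lemma sum_kronPowVec_two_le {ι : Type*} (s : Finset ι) {u : ι → Fin n → ℝ} (hu : ∀ k, 0 ≤ u k) :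
    ∑ k ∈ s, kronPowVec (u k) 2 ≤ kronPowVec (∑ k ∈ s, u k) 2 := fun i => by
  simp only [Finset.sum_apply, kronPowVec_two_apply, Finset.sum_mul_sum]
  exact Finset.sum_le_sum fun k hk =>
    Finset.single_le_sum (f := fun l => u k _ * u l _) (fun l _ => mul_nonneg (hu k _) (hu l _)) hk

lemma kronPow_two_nonneg {M : Matrix (Fin n) (Fin n) ℝ} (hM : ∀ i j, 0 ≤ M i j)
    (i j : Fin (n ^ 2)) :
    0 ≤ kronPow M 2 i j := by
  rw [kronPow_two_apply]; exact mul_nonneg (hM _ _) (hM _ _)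

lemma measurable_kronPow_two_apply (i j : Fin (n ^ 2)) :
    Measurable fun M : Matrix (Fin n) (Fin n) ℝ => kronPow M 2 i j := by
  simp only [kronPow_two_apply]
  fun_prop

lemma measurable_kronPow_two : Measurable fun M : Matrix (Fin n) (Fin n) ℝ => kronPow M 2 :=
  measurable_pi_iff.2 fun i => measurable_pi_iff.2 fun j => measurable_kronPow_two_apply i j

lemma measurable_kronPowVec_two_apply (i : Fin (n ^ 2)) :
    Measurable fun v : Fin n → ℝ => kronPowVec v 2 i := by
  simp only [kronPowVec_two_apply]
  fun_prop

lemma measurable_kronPowVec_two : Measurable fun v : Fin n → ℝ => kronPowVec v 2 :=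
  measurable_pi_iff.2 measurable_kronPowVec_two_apply

end KroneckerSquare

instance {m : Type*} [Fintype m] : MeasurableMul₂ (Matrix m m ℝ) where
  measurable_mul := by
    refine measurable_pi_iff.2 fun i => measurable_pi_iff.2 fun j => ?_
    simp only [mul_apply]
    fun_prop

section ProductOfCoefficients

variable {n : ℕ} {Ω : Type*}

lemma measurable_prodA [MeasurableSpace Ω] {A : ℤ → Ω → Matrix (Fin n) (Fin n) ℝ}
    (hA : ∀ s, Measurable (A s)) (t : ℤ) (k : ℕ) : Measurable fun ω => prodA A t ω k := by
  induction k with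
  | zero => exact measurable_const
  | succ k ih => exact ih.mul (hA _)

lemma prodA_congr {Ω' : Type*} {A : ℤ → Ω → Matrix (Fin n) (Fin n) ℝ}
    {A' : ℤ → Ω' → Matrix (Fin n) (Fin n) ℝ} {t : ℤ} {ω : Ω} {ω' : Ω'} {k : ℕ}
    (h : ∀ j < k, A (t - j) ω = A' (t - j) ω') : prodA A t ω k = prodA A' t ω' k := by
  induction k with
  | zero => rfl
  | succ k ih =>
    simp only [prodA]
    rw [ih fun j hj => h j (by omega), h k (by omega)]

lemma prodA_nonneg {A : ℤ → Ω → Matrix (Fin n) (Fin n) ℝ} {ω : Ω} (hA : ∀ s i j, 0 ≤ A s ω i j)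
    (t : ℤ) (k : ℕ) (i j : Fin n) : 0 ≤ prodA A t ω k i j := by
  induction k generalizing i j with
  | zero => by_cases h : i = j <;> simp [prodA, one_apply, h]
  | succ k ih => exact mul_apply_nonneg ih (hA _) i j

variable [MeasurableSpace Ω] {μ : Measure Ω}

lemma indepFun_prodA {β : Type*} [MeasurableSpace β] {A : ℤ → Ω → Matrix (Fin n) (Fin n) ℝ}
    {B : ℤ → Ω → β} (hmeas : ∀ t, Measurable fun ω => (A t ω, B t ω))
    (hindep : iIndepFun (fun t ω => (A t ω, B t ω)) μ) (t : ℤ) (k : ℕ) :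
    IndepFun (fun ω => prodA A t ω k) (fun ω => (A (t - k) ω, B (t - k) ω)) μ := by
  classical
  set S := (Finset.range k).image fun j : ℕ => t - j
  have hdisj : Disjoint S {t - k} := by
    simp only [S, Finset.disjoint_singleton_right, Finset.mem_image, Finset.mem_range, not_exists]
    omega
  -- `prodA A t · k` only reads the coordinates in `S`, so it factors through the `S`-tuple.
  let past : (S → Matrix (Fin n) (Fin n) ℝ × β) → Matrix (Fin n) (Fin n) ℝ := fun h =>
    prodA (fun s h => if hs : s ∈ S then (h ⟨s, hs⟩).1 else 1) t h k
  have hpast : Measurable past := measurable_prodA (fun s => by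
    by_cases hs : s ∈ S
    · simp only [hs, dif_pos]
      exact (measurable_pi_apply _).fst
    · simp only [hs, dif_neg, not_false_eq_true]
      exact measurable_const) t k
  convert (hindep.indepFun_finset S {t - k} hdisj hmeas).comp hpast
    (measurable_pi_apply ⟨t - k, Finset.mem_singleton_self _⟩) using 1
  · funext ω
    simp only [Function.comp, past]
    refine prodA_congr fun j hj => ?_
    rw [dif_pos (Finset.mem_image_of_mem _ (Finset.mem_range.2 hj))]
  · rfl

end ProductOfCoefficients

section IndependentProducts

variable {Ω : Type*} [MeasurableSpace Ω] {μ : Measure Ω} {l m p : Type*}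

lemma measurable_matrix_col (k : p) : Measurable fun M : Matrix m p ℝ => fun j => M j k :=
  measurable_pi_lambda _ fun j => (measurable_pi_apply j).eval

lemma ProbabilityTheory.IndepFun.integrable_mul_coord {X Y : Ω → m → ℝ} (h : IndepFun X Y μ)
    (hX : ∀ i, Integrable (fun ω => X ω i) μ) (hY : ∀ i, Integrable (fun ω => Y ω i) μ) (i : m) :
    Integrable (fun ω => X ω i * Y ω i) μ :=
  (h.comp (measurable_pi_apply i) (measurable_pi_apply i)).integrable_mul (hX i) (hY i)

variable [Fintype m]

lemma ProbabilityTheory.IndepFun.integrable_dotProduct {X Y : Ω → m → ℝ} (h : IndepFun X Y μ)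
    (hX : ∀ i, Integrable (fun ω => X ω i) μ) (hY : ∀ i, Integrable (fun ω => Y ω i) μ) :
    Integrable (fun ω => X ω ⬝ᵥ Y ω) μ :=
  integrable_finsetSum _ fun i _ => h.integrable_mul_coord hX hY i

lemma ProbabilityTheory.IndepFun.integral_dotProduct {X Y : Ω → m → ℝ} (h : IndepFun X Y μ)
    (hX : ∀ i, Integrable (fun ω => X ω i) μ) (hY : ∀ i, Integrable (fun ω => Y ω i) μ) :
    ∫ ω, X ω ⬝ᵥ Y ω ∂μ = (fun i => ∫ ω, X ω i ∂μ) ⬝ᵥ fun i => ∫ ω, Y ω i ∂μ := by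
  simp only [dotProduct]
  rw [integral_finsetSum _ fun i _ => h.integrable_mul_coord hX hY i]
  exact Finset.sum_congr rfl fun i _ =>
    (h.comp (measurable_pi_apply i) (measurable_pi_apply i)).integral_fun_mul_eq_mul_integral
      (hX i).aestronglyMeasurable (hY i).aestronglyMeasurable

lemma ProbabilityTheory.IndepFun.integrable_mul_apply {X : Ω → Matrix l m ℝ}
    {Y : Ω → Matrix m p ℝ} (h : IndepFun X Y μ) (hX : ∀ i j, Integrable (fun ω => X ω i j) μ)
    (hY : ∀ i j, Integrable (fun ω => Y ω i j) μ) (i : l) (k : p) :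
    Integrable (fun ω => (X ω * Y ω) i k) μ :=
  (h.comp (measurable_pi_apply i) (measurable_matrix_col k)).integrable_dotProduct (hX i)
    fun j => hY j k

lemma ProbabilityTheory.IndepFun.integral_mul_apply {X : Ω → Matrix l m ℝ}
    {Y : Ω → Matrix m p ℝ} (h : IndepFun X Y μ) (hX : ∀ i j, Integrable (fun ω => X ω i j) μ)
    (hY : ∀ i j, Integrable (fun ω => Y ω i j) μ) (i : l) (k : p) :
    ∫ ω, (X ω * Y ω) i k ∂μ =
      ((Matrix.of fun i j => ∫ ω, X ω i j ∂μ) * Matrix.of fun i j => ∫ ω, Y ω i j ∂μ) i k :=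
  (h.comp (measurable_pi_apply i) (measurable_matrix_col k)).integral_dotProduct (hX i)
    fun j => hY j k

lemma ProbabilityTheory.IndepFun.integrable_mulVec_apply {X : Ω → Matrix l m ℝ}
    {Y : Ω → m → ℝ} (h : IndepFun X Y μ) (hX : ∀ i j, Integrable (fun ω => X ω i j) μ)
    (hY : ∀ i, Integrable (fun ω => Y ω i) μ) (i : l) :
    Integrable (fun ω => (X ω *ᵥ Y ω) i) μ :=
  (h.comp (measurable_pi_apply i) measurable_id).integrable_dotProduct (hX i) hY

lemma ProbabilityTheory.IndepFun.integral_mulVec_apply {X : Ω → Matrix l m ℝ}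
    {Y : Ω → m → ℝ} (h : IndepFun X Y μ) (hX : ∀ i j, Integrable (fun ω => X ω i j) μ)
    (hY : ∀ i, Integrable (fun ω => Y ω i) μ) (i : l) :
    ∫ ω, (X ω *ᵥ Y ω) i ∂μ = ((Matrix.of fun i j => ∫ ω, X ω i j ∂μ) *ᵥ fun i => ∫ ω, Y ω i ∂μ) i :=
  (h.comp (measurable_pi_apply i) measurable_id).integral_dotProduct (hX i) hY

end IndependentProducts

structure IsIIDSequence {Ω β : Type*} [MeasurableSpace Ω] [MeasurableSpace β] (μ : Measure Ω)
    (Z : ℤ → Ω → β) : Prop where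
  measurable : ∀ t, Measurable (Z t)
  iIndepFun : iIndepFun Z μ
  identDistrib : ∀ t, IdentDistrib (Z t) (Z 0) μ μ

namespace IsIIDSequence

variable {Ω β : Type*} [MeasurableSpace Ω] [MeasurableSpace β] {μ : Measure Ω} {Z : ℤ → Ω → β}
  {g : β → ℝ}

lemma integrable_comp (hZ : IsIIDSequence μ Z) (hg : Measurable g)
    (h0 : Integrable (fun ω => g (Z 0 ω)) μ) (t : ℤ) : Integrable (fun ω => g (Z t ω)) μ :=
  ((hZ.identDistrib t).comp hg).integrable_iff.2 h0

lemma integral_comp (hZ : IsIIDSequence μ Z) (hg : Measurable g) (t : ℤ) :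
    ∫ ω, g (Z t ω) ∂μ = ∫ ω, g (Z 0 ω) ∂μ :=
  ((hZ.identDistrib t).comp hg).integral_eq

end IsIIDSequence

section SecondMoments

variable {n : ℕ} {Ω : Type*} [MeasurableSpace Ω] {μ : Measure Ω} [IsProbabilityMeasure μ]
  {A : ℤ → Ω → Matrix (Fin n) (Fin n) ℝ} {B : ℤ → Ω → Fin n → ℝ}

theorem integrable_kronPow_prodA_and_integral_eq
    (hZ : IsIIDSequence μ fun t ω => (A t ω, B t ω))
    (hAint : ∀ i j, Integrable (fun ω => kronPow (A 0 ω) 2 i j) μ) (t : ℤ) (k : ℕ) :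
    (∀ i j, Integrable (fun ω => kronPow (prodA A t ω k) 2 i j) μ) ∧
      Matrix.of (fun i j => ∫ ω, kronPow (prodA A t ω k) 2 i j ∂μ) =
        (Matrix.of fun i j => ∫ ω, kronPow (A 0 ω) 2 i j ∂μ) ^ k := by
  induction k with
  | zero =>
    simp only [prodA, kronPow_two_one, pow_zero]
    refine ⟨fun i j => integrable_const _, ?_⟩
    ext i j
    simp
  | succ k ih =>
    have hfac (ω : Ω) : kronPow (prodA A t ω (k + 1)) 2 =
        kronPow (prodA A t ω k) 2 * kronPow (A (t - k) ω) 2 := kronPow_two_mul _ _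
    have hind : IndepFun (fun ω => kronPow (prodA A t ω k) 2)
        (fun ω => kronPow (A (t - k) ω) 2) μ :=
      (indepFun_prodA hZ.measurable hZ.iIndepFun t k).comp measurable_kronPow_two
        (measurable_kronPow_two.comp measurable_fst)
    have hmeas (i j : Fin (n ^ 2)) :
        Measurable fun p : Matrix (Fin n) (Fin n) ℝ × (Fin n → ℝ) => kronPow p.1 2 i j :=
      (measurable_kronPow_two_apply i j).comp measurable_fst
    have hAint' (i j) : Integrable (fun ω => kronPow (A (t - k) ω) 2 i j) μ :=
      hZ.integrable_comp (hmeas i j) (hAint i j) _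
    have hmoment : (Matrix.of fun i j => ∫ ω, kronPow (A (t - k) ω) 2 i j ∂μ) =
        Matrix.of fun i j => ∫ ω, kronPow (A 0 ω) 2 i j ∂μ := by
      ext i j
      exact hZ.integral_comp (hmeas i j) _
    simp only [hfac]
    refine ⟨hind.integrable_mul_apply ih.1 hAint', ?_⟩
    ext i j
    rw [of_apply, hind.integral_mul_apply ih.1 hAint', ih.2, hmoment, pow_succ _ k]

theorem integrable_kronPow_prodA_mulVec_and_integral_eq
    (hZ : IsIIDSequence μ fun t ω => (A t ω, B t ω))
    (hAint : ∀ i j, Integrable (fun ω => kronPow (A 0 ω) 2 i j) μ)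
    (hBint : ∀ i, Integrable (fun ω => kronPowVec (B 0 ω) 2 i) μ) (t : ℤ) (k : ℕ) :
    (∀ i, Integrable (fun ω => (kronPow (prodA A t ω k) 2 *ᵥ kronPowVec (B (t - k) ω) 2) i) μ) ∧
      (fun i => ∫ ω, (kronPow (prodA A t ω k) 2 *ᵥ kronPowVec (B (t - k) ω) 2) i ∂μ) =
        (Matrix.of fun i j => ∫ ω, kronPow (A 0 ω) 2 i j ∂μ) ^ k *ᵥ
          fun i => ∫ ω, kronPowVec (B 0 ω) 2 i ∂μ := by
  obtain ⟨hPint, hPmoment⟩ := integrable_kronPow_prodA_and_integral_eq hZ hAint t k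
  have hind : IndepFun (fun ω => kronPow (prodA A t ω k) 2)
      (fun ω => kronPowVec (B (t - k) ω) 2) μ :=
    (indepFun_prodA hZ.measurable hZ.iIndepFun t k).comp measurable_kronPow_two
      (measurable_kronPowVec_two.comp measurable_snd)
  have hmeas (i : Fin (n ^ 2)) :
      Measurable fun p : Matrix (Fin n) (Fin n) ℝ × (Fin n → ℝ) => kronPowVec p.2 2 i :=
    (measurable_kronPowVec_two_apply i).comp measurable_snd
  have hBint' (i) : Integrable (fun ω => kronPowVec (B (t - k) ω) 2 i) μ :=
    hZ.integrable_comp (hmeas i) (hBint i) _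
  refine ⟨hind.integrable_mulVec_apply hPint hBint', ?_⟩
  ext i
  rw [hind.integral_mulVec_apply hPint hBint', hPmoment]
  congr 2
  ext j
  exact hZ.integral_comp (hmeas j) _

end SecondMoments

section Recursion

variable {n : ℕ} {Ω : Type*} {A : ℤ → Ω → Matrix (Fin n) (Fin n) ℝ} {B Y : ℤ → Ω → Fin n → ℝ}
  {ω : Ω}

theorem eq_sum_prodA_mulVec_add (hrec : ∀ s, Y s ω = A s ω *ᵥ Y (s - 1) ω + B s ω) (t : ℤ)
    (m : ℕ) : Y t ω = ∑ k ∈ Finset.range m, prodA A t ω k *ᵥ B (t - k) ω +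
      prodA A t ω m *ᵥ Y (t - m) ω := by
  induction m with
  | zero => simp [prodA]
  | succ m ih =>
    rw [ih, hrec (t - m), mulVec_add, mulVec_mulVec, Finset.sum_range_succ]
    simp only [prodA, Nat.cast_add, Nat.cast_one, sub_sub]
    abel

theorem sum_kronPow_prodA_mulVec_le (hA : ∀ s i j, 0 ≤ A s ω i j) (hB : ∀ s, 0 ≤ B s ω)
    (hY : ∀ s, 0 ≤ Y s ω) (hrec : ∀ s, Y s ω = A s ω *ᵥ Y (s - 1) ω + B s ω) (t : ℤ) (m : ℕ) :
    ∑ k ∈ Finset.range m, kronPow (prodA A t ω k) 2 *ᵥ kronPowVec (B (t - k) ω) 2 ≤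
      kronPowVec (Y t ω) 2 := by
  have hterm (k : ℕ) : 0 ≤ prodA A t ω k *ᵥ B (t - k) ω :=
    mulVec_nonneg_of_nonneg (prodA_nonneg hA t k) (hB _)
  have hpartial : ∑ k ∈ Finset.range m, prodA A t ω k *ᵥ B (t - k) ω ≤ Y t ω := by
    conv_rhs => rw [eq_sum_prodA_mulVec_add hrec t m]
    exact le_add_of_nonneg_right (mulVec_nonneg_of_nonneg (prodA_nonneg hA t m) (hY _))
  simp only [← kronPowVec_two_mulVec]
  exact (sum_kronPowVec_two_le _ hterm).trans
    (kronPowVec_two_mono (Finset.sum_nonneg fun k _ => hterm k) hpartial)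

end Recursion

lemma integrable_kronPowVec_two_apply {n : ℕ} {Ω : Type*} [MeasurableSpace Ω] {μ : Measure Ω}
    {Y : Ω → Fin n → ℝ} (hY : Measurable Y) (h : Integrable (fun ω => ‖Y ω‖ ^ 2) μ)
    (i : Fin (n ^ 2)) : Integrable (fun ω => kronPowVec (Y ω) 2 i) μ := by
  refine h.mono ((measurable_kronPowVec_two_apply i).comp hY).aestronglyMeasurable
    (Eventually.of_forall fun ω => ?_)
  rw [kronPowVec_two_apply, norm_mul, norm_pow, norm_norm, sq ‖Y ω‖]
  exact mul_le_mul (norm_le_pi_norm _ _) (norm_le_pi_norm _ _) (norm_nonneg _) (norm_nonneg _)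

theorem sum_range_pow_mulVec_le_integral {n : ℕ} {Ω : Type*} [MeasurableSpace Ω] {μ : Measure Ω}
    [IsProbabilityMeasure μ] {A : ℤ → Ω → Matrix (Fin n) (Fin n) ℝ} {B Y : ℤ → Ω → Fin n → ℝ}
    (hZ : IsIIDSequence μ fun t ω => (A t ω, B t ω))
    (hAint : ∀ i j, Integrable (fun ω => kronPow (A 0 ω) 2 i j) μ)
    (hBint : ∀ i, Integrable (fun ω => kronPowVec (B 0 ω) 2 i) μ)
    (hA : ∀ s, ∀ᵐ ω ∂μ, ∀ i j, 0 ≤ A s ω i j) (hB : ∀ s, ∀ᵐ ω ∂μ, 0 ≤ B s ω)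
    (hY : ∀ s, ∀ᵐ ω ∂μ, 0 ≤ Y s ω) (hrec : ∀ s, ∀ᵐ ω ∂μ, Y s ω = A s ω *ᵥ Y (s - 1) ω + B s ω)
    {t : ℤ} (hYint : ∀ i, Integrable (fun ω => kronPowVec (Y t ω) 2 i) μ) (m : ℕ)
    (i : Fin (n ^ 2)) :
    ∑ k ∈ Finset.range m, ((Matrix.of fun i j => ∫ ω, kronPow (A 0 ω) 2 i j ∂μ) ^ k *ᵥ
        fun i => ∫ ω, kronPowVec (B 0 ω) 2 i ∂μ) i ≤ ∫ ω, kronPowVec (Y t ω) 2 i ∂μ := by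
  have hmoment (k : ℕ) := integrable_kronPow_prodA_mulVec_and_integral_eq hZ hAint hBint t k
  have hpath : ∀ᵐ ω ∂μ, ∀ s, (∀ i j, 0 ≤ A s ω i j) ∧ 0 ≤ B s ω ∧ 0 ≤ Y s ω ∧
      Y s ω = A s ω *ᵥ Y (s - 1) ω + B s ω := by
    refine ae_all_iff.2 fun s => ?_
    filter_upwards [hA s, hB s, hY s, hrec s] with ω h₁ h₂ h₃ h₄ using ⟨h₁, h₂, h₃, h₄⟩
  simp only [← (hmoment _).2]
  rw [← integral_finsetSum _ fun k _ => (hmoment k).1 i]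
  refine integral_mono_ae (integrable_finsetSum _ fun k _ => (hmoment k).1 i) (hYint i) ?_
  filter_upwards [hpath] with ω hω
  simpa only [Finset.sum_apply] using sum_kronPow_prodA_mulVec_le (fun s => (hω s).1)
    (fun s => (hω s).2.1) (fun s => (hω s).2.2.1) (fun s => (hω s).2.2.2) t m i

/-- **Necessity for finite second moments.** If `ρ(E[A₀^{⊗2}]) ≥ 1` and
`E[B₀^{⊗2}]` has strictly positive coordinates, then the series
`∑_k (E[A₀^{⊗2}])^k E[B₀^{⊗2}]` diverges in some coordinate, and no (strictly) stationary
solution of `Y_t = A_t Y_{t-1} + B_t` can have `E[‖Y_t‖²] < ∞`. -/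
theorem stmt19 {n : ℕ} {Ω : Type*} [MeasurableSpace Ω] (μ : Measure Ω) [IsProbabilityMeasure μ]
    (A : ℤ → Ω → Matrix (Fin n) (Fin n) ℝ) (B : ℤ → Ω → Fin n → ℝ)
    (hmeas : ∀ t, Measurable fun ω => (A t ω, B t ω))
    (hindep : iIndepFun (fun t ω => (A t ω, B t ω)) μ)
    (hident : ∀ t, Measure.map (fun ω => (A t ω, B t ω)) μ
      = Measure.map (fun ω => (A 0 ω, B 0 ω)) μ)
    (hApos : ∀ t, ∀ᵐ ω ∂μ, ∀ i j, 0 ≤ A t ω i j)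
    (hBpos : ∀ t, ∀ᵐ ω ∂μ, ∀ i, 0 ≤ B t ω i)
    (hAkronInt : ∀ i j, Integrable (fun ω => kronPow (A 0 ω) 2 i j) μ)
    (hBkronInt : ∀ i, Integrable (fun ω => kronPowVec (B 0 ω) 2 i) μ)
    (hspec : ∃ z ∈ spectrum ℂ
      ((Matrix.of fun i j => ∫ ω, kronPow (A 0 ω) 2 i j ∂μ).map (algebraMap ℝ ℂ)), 1 ≤ ‖z‖)
    (hB2pos : ∀ i, 0 < ∫ ω, kronPowVec (B 0 ω) 2 i ∂μ) :
    (∃ i, ¬ Summable fun k =>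
      (((Matrix.of fun i j => ∫ ω, kronPow (A 0 ω) 2 i j ∂μ) ^ k) *ᵥ
        fun i => ∫ ω, kronPowVec (B 0 ω) 2 i ∂μ) i) ∧
    (∀ Y : ℤ → Ω → Fin n → ℝ, (∀ t, Measurable (Y t)) →
      (∀ t, ∀ᵐ ω ∂μ, ∀ i, 0 ≤ Y t ω i) →
      (∀ t, Measure.map (Y t) μ = Measure.map (Y 0) μ) →
      (∀ t, ∀ᵐ ω ∂μ, Y t ω = A t ω *ᵥ Y (t - 1) ω + B t ω) →
      ¬ Integrable (fun ω => ‖Y 0 ω‖ ^ 2) μ) := by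
  have hZ : IsIIDSequence μ fun t ω => (A t ω, B t ω) :=
    ⟨hmeas, hindep, fun t => ⟨(hmeas t).aemeasurable, (hmeas 0).aemeasurable, hident t⟩⟩
  have hM : ∀ i j, 0 ≤ (Matrix.of fun i j => ∫ ω, kronPow (A 0 ω) 2 i j ∂μ) i j := fun i j =>
    integral_nonneg_of_ae <| (hApos 0).mono fun ω hω => kronPow_two_nonneg hω i j
  obtain ⟨z, hz, hz1⟩ := hspec
  have hdiv := exists_not_summable_pow_mulVec hM hB2pos hz hz1
  refine ⟨hdiv, fun Y hYmeas hYpos _ hrec hYint => ?_⟩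
  obtain ⟨i, hi⟩ := hdiv
  exact hi <| summable_of_sum_range_le
    (fun k => mulVec_nonneg_of_nonneg (pow_apply_nonneg_of_nonneg hM k) (fun j => (hB2pos j).le) i)
    fun m => sum_range_pow_mulVec_le_integral hZ hAkronInt hBkronInt hApos hBpos hYpos hrec
      (integrable_kronPowVec_two_apply (hYmeas 0) hYint) m i
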